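/- Let g be a finite-dimensional real Lie algebra with a norm and let γ : [0,1] → g be continuous. Then for every t ∈ [0,1] the endomorphism A_γ(t) is an automorphism of the Lie algebra g; that is, A_γ(t)[x,y] = [A_γ(t)x, A_γ(t)y] for all x, y ∈ g. -/

import Mathlib

/-- `IsLieBracket B` says that the bilinear map `B = ⁅·,·⁆` makes the
(finite-dimensional, normed) real vector space `g` into a real Lie algebra:
it is alternating and satisfies the Jacobi identity (in Leibniz form). -/
def IsLieBracket {g : Type*} [NormedAddCommGroup g] [NormedSpace ℝ g]
    (B : g →ₗ[ℝ] g →ₗ[ℝ] g) : Prop :=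
  (∀ x : g, B x x = 0) ∧
  (∀ x y z : g, B x (B y z) = B (B x y) z + B y (B x z))

/-- The adjoint endomorphism `ad x = ⁅x, ·⁆` as a continuous linear map. -/
noncomputable def adL {g : Type*} [NormedAddCommGroup g] [NormedSpace ℝ g]
    [FiniteDimensional ℝ g] (B : g →ₗ[ℝ] g →ₗ[ℝ] g) (x : g) : g →L[ℝ] g :=
  LinearMap.toContinuousLinearMap (B x)

/-- `IsTransport B γ A` says that `A : [0,1] → End(g)` is a continuously
differentiable path of linear endomorphisms of `g` with `A 0 = id` and
`A' t = ad (γ t) ∘ A t` for `t ∈ [0,1]` (one-sided derivatives at the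
endpoints, and the derivative is continuous on `[0,1]`). -/
def IsTransport {g : Type*} [NormedAddCommGroup g] [NormedSpace ℝ g]
    [FiniteDimensional ℝ g] (B : g →ₗ[ℝ] g →ₗ[ℝ] g)
    (γ : ℝ → g) (A : ℝ → (g →L[ℝ] g)) : Prop :=
  A 0 = 1 ∧
  (∀ t ∈ Set.Icc (0:ℝ) 1,
    HasDerivWithinAt A ((adL B (γ t)).comp (A t)) (Set.Icc (0:ℝ) 1) t) ∧
  ContinuousOn (fun t => (adL B (γ t)).comp (A t)) (Set.Icc (0:ℝ) 1)

/-- The path `A_γ : [0,1] → End(g)`, i.e. the unique continuously differentiable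
solution of `A 0 = id`, `A' t = ad (γ t) ∘ A t` (chosen via choice; for a
continuous path `γ` it exists and is unique on `[0,1]`). -/
noncomputable def transport {g : Type*} [NormedAddCommGroup g] [NormedSpace ℝ g]
    [FiniteDimensional ℝ g] (B : g →ₗ[ℝ] g →ₗ[ℝ] g) (γ : ℝ → g) :
    ℝ → (g →L[ℝ] g) :=
  letI := Classical.propDecidable (∃ A : ℝ → (g →L[ℝ] g), IsTransport B γ A)
  if h : ∃ A : ℝ → (g →L[ℝ] g), IsTransport B γ A then h.choose else fun _ => 1

/-! The defect `δ(t) = A_γ(t)⁅x,y⁆ - ⁅A_γ(t)x, A_γ(t)y⁆` vanishes at `t = 0`, and since the Jacobi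
identity makes each `ad (γ t)` a derivation, it solves the same linear equation
`δ' = ad (γ t) ∘ δ` as `A_γ`. By Grönwall's inequality a solution of a linear equation with
continuous coefficients that starts at `0` stays `0`. -/

open Set

theorem linear_ODE_solution_eq_zero_of_eq_zero_left {E : Type*} [NormedAddCommGroup E]
    [NormedSpace ℝ E] {L : ℝ → E →L[ℝ] E} {f : ℝ → E} {a b : ℝ}
    (hL : ContinuousOn L (Icc a b)) (hf : ContinuousOn f (Icc a b))
    (hf' : ∀ s ∈ Ico a b, HasDerivWithinAt f (L s (f s)) (Ici s) s) (ha : f a = 0) :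
    ∀ s ∈ Icc a b, f s = 0 := by
  obtain ⟨K, hK⟩ := isCompact_Icc.exists_bound_of_continuousOn hL
  refine eq_zero_of_abs_deriv_le_mul_abs_self_of_eq_zero_right (K := K) hf hf' ha fun s hs => ?_
  calc ‖L s (f s)‖ ≤ ‖L s‖ * ‖f s‖ := (L s).le_opNorm _
    _ ≤ K * ‖f s‖ := by gcongr; exact hK s (Ico_subset_Icc_self hs)

section Transport

variable {g : Type*} [NormedAddCommGroup g] [NormedSpace ℝ g] [FiniteDimensional ℝ g]

theorem continuous_adL (B : g →ₗ[ℝ] g →ₗ[ℝ] g) : Continuous (adL B) :=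
  B.toContinuousBilinearMap.continuous

theorem hasDerivWithinAt_apply_sub_bracket {B : g →ₗ[ℝ] g →ₗ[ℝ] g} {A : ℝ → g →L[ℝ] g}
    {D : g →L[ℝ] g} {s : Set ℝ} {t : ℝ} (hD : ∀ u v, D (B u v) = B (D u) v + B u (D v))
    (hA : HasDerivWithinAt A (D.comp (A t)) s t) (x y : g) :
    HasDerivWithinAt (fun τ => A τ (B x y) - B (A τ x) (A τ y))
      (D (A t (B x y) - B (A t x) (A t y))) s t := by
  have hAx := hA.clm_apply (hasDerivWithinAt_const t s x)
  have hAy := hA.clm_apply (hasDerivWithinAt_const t s y)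
  have hAxy := hA.clm_apply (hasDerivWithinAt_const t s (B x y))
  have hBAxAy := B.toContinuousBilinearMap.hasDerivWithinAt_of_bilinear hAx hAy
  refine (hAxy.sub hBAxAy).congr_deriv ?_
  simp only [ContinuousLinearMap.comp_apply, map_zero, add_zero, map_sub, hD,
    LinearMap.toContinuousBilinearMap_apply]
  abel

theorem IsTransport.map_bracket {B : g →ₗ[ℝ] g →ₗ[ℝ] g}
    (hB : ∀ x y z, B x (B y z) = B (B x y) z + B y (B x z))
    {γ : ℝ → g} (hγ : ContinuousOn γ (Icc 0 1)) {A : ℝ → g →L[ℝ] g} (hA : IsTransport B γ A) :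
    ∀ t ∈ Icc (0:ℝ) 1, ∀ x y : g, A t (B x y) = B (A t x) (A t y) := by
  obtain ⟨hA0, hA', -⟩ := hA
  intro t ht x y
  set δ : ℝ → g := fun τ => A τ (B x y) - B (A τ x) (A τ y) with hδ
  have hAc : ContinuousOn A (Icc 0 1) := fun s hs => (hA' s hs).continuousWithinAt
  have hδc : ContinuousOn δ (Icc 0 1) :=
    (hAc.clm_apply continuousOn_const).sub
      (B.toContinuousBilinearMap.continuous₂.comp_continuousOn
        ((hAc.clm_apply continuousOn_const).prodMk (hAc.clm_apply continuousOn_const)))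
  have hδ' : ∀ s ∈ Ico (0:ℝ) 1, HasDerivWithinAt δ (adL B (γ s) (δ s)) (Ici s) s := by
    intro s hs
    have hAs := (hA' s (Ico_subset_Icc_self hs)).mono_of_mem_nhdsWithin (Icc_mem_nhdsGE_of_mem hs)
    exact hasDerivWithinAt_apply_sub_bracket (hB (γ s)) hAs x y
  have hδ0 : δ 0 = 0 := by simp [hδ, hA0]
  exact sub_eq_zero.mp <| linear_ODE_solution_eq_zero_of_eq_zero_left
    ((continuous_adL B).comp_continuousOn hγ) hδc hδ' hδ0 t ht

end Transport

/-- For every `t ∈ [0,1]`, the endomorphism `A_γ(t)` is an automorphism of the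
Lie algebra `g`: it intertwines the Lie bracket, `A_γ(t)⁅x,y⁆ = ⁅A_γ(t)x, A_γ(t)y⁆`. -/
theorem transport_bracket {g : Type*}
    [NormedAddCommGroup g] [NormedSpace ℝ g] [FiniteDimensional ℝ g]
    (B : g →ₗ[ℝ] g →ₗ[ℝ] g) (hB : IsLieBracket B)
    (γ : ℝ → g) (hγ : ContinuousOn γ (Set.Icc 0 1)) :
    ∀ t ∈ Set.Icc (0:ℝ) 1, ∀ x y : g,
      transport B γ t (B x y) = B (transport B γ t x) (transport B γ t y) := by
  unfold transport
  split_ifs with h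
  · exact h.choose_spec.map_bracket hB.2 hγ
  -- without a solution, `transport` is the junk value `1`
  · simp
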